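/- Let X be a quasi-compact quasi-separated scheme and let W_1, …, W_m be finitely many locally closed constructible subsets stratifying X (i.e. X is their disjoint union). Then there is a finite filtration ∅ = X_0 ⊆ X_1 ⊆ ⋯ ⊆ X_n = X by quasi-compact open subsets such that each difference X_i \ X_{i-1} is contained in some W_j. -/

import Mathlib

/-!
Each stratum `W j = ⋃ i, U j i \ V j i` is a Boolean combination of finitely many quasi-compact
opens, so it suffices to find a filtration by quasi-compact opens each of whose differences lies
either inside or outside each of these opens: such a difference lies inside or outside each
stratum, and as the strata cover `X`, inside one of them. Such a filtration is built one open `U`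
at a time, starting from `∅ ⊆ X`, by inserting `F i ∪ (F (i + 1) ∩ U)` between `F i` and
`F (i + 1)`; this cuts each difference along `U`, and the inserted set is again quasi-compact
because `X` is quasi-separated.
-/

open AlgebraicGeometry

/-- A subset of (the underlying space of) a scheme is constructible if it is a finite
union of differences of quasi-compact open subsets. -/
def SchemeIsConstructible {X : Scheme} (s : Set X) : Prop :=
  ∃ (n : ℕ) (U V : Fin n → Set X),
    (∀ i, IsOpen (U i) ∧ IsCompact (U i)) ∧
    (∀ i, IsOpen (V i) ∧ IsCompact (V i)) ∧
    s = ⋃ i, U i \ V i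

open Set

section Filtration

variable {X : Type*}

/-- Insert `F i ∪ (F (i + 1) ∩ U)` between `F i = refineBy F U (2 * i)` and
`F (i + 1) = refineBy F U (2 * i + 2)`. -/
def refineBy (F : ℕ → Set X) (U : Set X) (k : ℕ) : Set X :=
  F (k / 2) ∪ (F ((k + 1) / 2) ∩ U)

lemma refineBy_two_mul (F : ℕ → Set X) (U : Set X) (i : ℕ) : refineBy F U (2 * i) = F i := by
  have h : (2 * i + 1) / 2 = i := by omega
  simp [refineBy, h]

lemma refineBy_two_mul_add_one (F : ℕ → Set X) (U : Set X) (i : ℕ) :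
    refineBy F U (2 * i + 1) = F i ∪ (F (i + 1) ∩ U) := by
  have h₁ : (2 * i + 1) / 2 = i := by omega
  have h₂ : (2 * i + 1 + 1) / 2 = i + 1 := by omega
  rw [refineBy, h₁, h₂]

lemma diff_refineBy_subset (F : ℕ → Set X) (U : Set X) (k : ℕ) :
    refineBy F U (k + 1) \ refineBy F U k ⊆ (F (k / 2 + 1) \ F (k / 2)) ∩ U ∨
      refineBy F U (k + 1) \ refineBy F U k ⊆ (F (k / 2 + 1) \ F (k / 2)) \ U := by
  obtain ⟨i, rfl | rfl⟩ := Nat.even_or_odd' k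
  · left
    have h : 2 * i / 2 = i := by omega
    rw [refineBy_two_mul_add_one, refineBy_two_mul, h]
    rintro x ⟨hx | hx, hxi⟩
    exacts [(hxi hx).elim, ⟨⟨hx.1, hxi⟩, hx.2⟩]
  · right
    have h : (2 * i + 1) / 2 = i := by omega
    rw [show 2 * i + 1 + 1 = 2 * (i + 1) by ring, refineBy_two_mul, refineBy_two_mul_add_one, h]
    rintro x ⟨hx, hxi⟩
    exact ⟨⟨hx, fun h => hxi (Or.inl h)⟩, fun h => hxi (Or.inr ⟨hx, h⟩)⟩

variable [TopologicalSpace X]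

structure IsQCOpenFiltration (F : ℕ → Set X) (n : ℕ) : Prop where
  bot : F 0 = ∅
  top : F n = univ
  mono : Monotone F
  isOpen : ∀ i, IsOpen (F i)
  isCompact : ∀ i, IsCompact (F i)

lemma isQCOpenFiltration_trivial [CompactSpace X] :
    IsQCOpenFiltration (fun k => if k = 0 then (∅ : Set X) else univ) 1 where
  bot := rfl
  top := rfl
  mono a b hab := by
    dsimp only
    split_ifs <;> first | exact empty_subset _ | exact subset_univ _ | omega
  isOpen i := by split_ifs <;> simp
  isCompact i := by split_ifs <;> simp [isCompact_univ]

lemma IsQCOpenFiltration.refineBy [QuasiSeparatedSpace X] {F : ℕ → Set X} {n : ℕ}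
    (hF : IsQCOpenFiltration F n) {U : Set X} (hUo : IsOpen U) (hUc : IsCompact U) :
    IsQCOpenFiltration (refineBy F U) (2 * n) where
  bot := by simpa using (refineBy_two_mul F U 0).trans hF.bot
  top := by rw [refineBy_two_mul, hF.top]
  mono a b hab := union_subset_union (hF.mono (Nat.div_le_div_right hab))
    (inter_subset_inter_left _ (hF.mono (Nat.div_le_div_right (by omega))))
  isOpen k := (hF.isOpen _).union ((hF.isOpen _).inter hUo)
  isCompact k := (hF.isCompact _).union
    ((hF.isCompact _).inter_of_isOpen hUc (hF.isOpen _) hUo)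

theorem exists_isQCOpenFiltration_diff_subset_or_subset_compl [CompactSpace X]
    [QuasiSeparatedSpace X] {S : Set (Set X)} (hS : S.Finite)
    (hSqc : ∀ U ∈ S, IsOpen U ∧ IsCompact U) :
    ∃ (n : ℕ) (F : ℕ → Set X), IsQCOpenFiltration F n ∧
      ∀ k, ∀ U ∈ S, F (k + 1) \ F k ⊆ U ∨ F (k + 1) \ F k ⊆ Uᶜ := by
  induction S, hS using Set.Finite.induction_on with
  | empty => exact ⟨1, _, isQCOpenFiltration_trivial, by simp⟩
  | @insert U S _ _ ih =>
    obtain ⟨n, F, hF, hdiff⟩ := ih fun V hV => hSqc V (mem_insert_of_mem U hV)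
    obtain ⟨hUo, hUc⟩ := hSqc U (mem_insert U S)
    refine ⟨2 * n, refineBy F U, hF.refineBy hUo hUc, fun k V hV => ?_⟩
    have hsub : refineBy F U (k + 1) \ refineBy F U k ⊆ F (k / 2 + 1) \ F (k / 2) := by
      rcases diff_refineBy_subset F U k with h | h <;> exact h.trans fun _ hx => hx.1
    rcases hV with rfl | hV
    · rcases diff_refineBy_subset F V k with h | h
      exacts [.inl (h.trans inter_subset_right), .inr (h.trans fun _ hx => hx.2)]
    · rcases hdiff (k / 2) V hV with h | h
      exacts [.inl (hsub.trans h), .inr (hsub.trans h)]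

end Filtration

section Homogeneous

variable {α : Type*} {D : Set α}

lemma subset_or_subset_compl_iff_forall_mem_imp {A : Set α} :
    D ⊆ A ∨ D ⊆ Aᶜ ↔ ∀ x ∈ D, ∀ y ∈ D, x ∈ A → y ∈ A := by
  constructor
  · rintro (h | h) x hx y hy hxA
    exacts [h hy, (h hx hxA).elim]
  · intro h
    by_contra! hD
    obtain ⟨y, hy, hyA⟩ := not_subset.1 hD.1
    obtain ⟨x, hx, hxA⟩ := not_subset.1 hD.2
    exact hyA (h x hx y hy (not_not.1 hxA))

lemma subset_or_subset_compl_iUnion_diff {ι : Type*} {U V : ι → Set α}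
    (hU : ∀ i, D ⊆ U i ∨ D ⊆ (U i)ᶜ) (hV : ∀ i, D ⊆ V i ∨ D ⊆ (V i)ᶜ) :
    D ⊆ ⋃ i, U i \ V i ∨ D ⊆ (⋃ i, U i \ V i)ᶜ := by
  simp only [subset_or_subset_compl_iff_forall_mem_imp] at hU hV ⊢
  intro x hx y hy hxUV
  obtain ⟨i, hxU, hxV⟩ := mem_iUnion.1 hxUV
  exact mem_iUnion.2 ⟨i, hU i x hx y hy hxU, fun hyV => hxV (hV i y hy x hx hyV)⟩

lemma exists_subset_of_iUnion_eq_univ [Nonempty α] {ι : Type*} {W : ι → Set α}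
    (hcover : ⋃ j, W j = univ) (hD : ∀ j, D ⊆ W j ∨ D ⊆ (W j)ᶜ) : ∃ j, D ⊆ W j := by
  rcases D.eq_empty_or_nonempty with rfl | ⟨x, hx⟩
  · obtain ⟨j, -⟩ := mem_iUnion.1 (hcover ▸ mem_univ (Classical.arbitrary α))
    exact ⟨j, empty_subset _⟩
  · obtain ⟨j, hj⟩ := mem_iUnion.1 (hcover ▸ mem_univ x)
    exact ⟨j, (hD j).resolve_right fun h => h hx hj⟩

end Homogeneous

theorem exists_filtration_of_stratification_general {X : Scheme} [CompactSpace X]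
    [QuasiSeparatedSpace X] (m : ℕ) (W : Fin m → Set X)
    (hcon : ∀ j, SchemeIsConstructible (W j))
    (hcover : ⋃ j, W j = Set.univ) :
    ∃ (n : ℕ) (F : ℕ → Set X), F 0 = ∅ ∧ F n = Set.univ ∧
      (∀ i, F i ⊆ F (i + 1)) ∧
      (∀ i, IsOpen (F i) ∧ IsCompact (F i)) ∧
      (∀ i < n, ∃ j, F (i + 1) \ F i ⊆ W j) := by
  rcases isEmpty_or_nonempty X with hX | hX
  · exact ⟨0, fun _ => ∅, rfl, (univ_eq_empty_iff.2 hX).symm, fun _ => subset_rfl,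
      fun _ => ⟨isOpen_empty, isCompact_empty⟩, fun i hi => (Nat.not_lt_zero i hi).elim⟩
  choose N U V hU hV hW using hcon
  let S := ⋃ j, range (U j) ∪ range (V j)
  have hUS : ∀ j k, U j k ∈ S := fun j k => mem_iUnion.2 ⟨j, .inl ⟨k, rfl⟩⟩
  have hVS : ∀ j k, V j k ∈ S := fun j k => mem_iUnion.2 ⟨j, .inr ⟨k, rfl⟩⟩
  have hSqc : ∀ G ∈ S, IsOpen G ∧ IsCompact G := by
    simp only [S, mem_iUnion, mem_union, mem_range]
    rintro _ ⟨j, ⟨k, rfl⟩ | ⟨k, rfl⟩⟩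
    exacts [hU j k, hV j k]
  obtain ⟨n, F, hF, hdiff⟩ := exists_isQCOpenFiltration_diff_subset_or_subset_compl
    (finite_iUnion fun j => (finite_range _).union (finite_range _)) hSqc
  refine ⟨n, F, hF.bot, hF.top, fun i => hF.mono i.le_succ,
    fun i => ⟨hF.isOpen i, hF.isCompact i⟩,
    fun i _ => exists_subset_of_iUnion_eq_univ hcover fun j => ?_⟩
  rw [hW j]
  exact subset_or_subset_compl_iUnion_diff (fun k => hdiff i _ (hUS j k))
    (fun k => hdiff i _ (hVS j k))

/-- On a quasi-compact quasi-separated scheme, a finite stratification by locally closed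
constructible subsets is refined by a finite filtration by quasi-compact open subsets:
each difference of consecutive opens is contained in one stratum. -/
theorem exists_filtration_of_stratification {X : Scheme} [CompactSpace X]
    [QuasiSeparatedSpace X] (m : ℕ) (W : Fin m → Set X)
    (hlc : ∀ j, IsLocallyClosed (W j)) (hcon : ∀ j, SchemeIsConstructible (W j))
    (hdisj : Pairwise (Function.onFun Disjoint W)) (hcover : ⋃ j, W j = Set.univ) :
    ∃ (n : ℕ) (F : ℕ → Set X), F 0 = ∅ ∧ F n = Set.univ ∧
      (∀ i, F i ⊆ F (i + 1)) ∧
      (∀ i, IsOpen (F i) ∧ IsCompact (F i)) ∧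
      (∀ i < n, ∃ j, F (i + 1) \ F i ⊆ W j) :=
  exists_filtration_of_stratification_general m W hcon hcover
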